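/- For every n ≥ 6, the partitions of n with first part n−3 satisfy |η_{(n−3,3)}| > |η_{(n−3,2,1)}| ≥ |η_{(n−3,1,1,1)}|, and the second inequality is an equality if and only if n = 6 (so it is strict for n ≥ 7). -/

import Mathlib

/-- Derangement numbers: `D 0 = 1`, `D (m+1) = (m+1) * D m + (-1)^(m+1)`. -/
def derange : ℕ → ℤ
  | 0 => 1
  | n + 1 => (n + 1 : ℤ) * derange n + (-1) ^ (n + 1)

/-- Subtract one from every part and discard the parts that become zero
(deleting the first column of the Ferrers diagram). -/
def strip (l : List ℕ) : List ℕ := (l.map (· - 1)).filter (fun x => 0 < x)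

lemma strip_measure (l : List ℕ) : (strip l).sum + (strip l).length ≤ l.sum := by
  induction l with
  | nil => simp [strip]
  | cons x t ih =>
      simp only [strip, List.map_cons, List.filter_cons] at ih ⊢
      by_cases hx : 0 < x - 1 <;> simp [hx] <;> omega

/-- The eigenvalues of the derangement graph, defined by Renteln's recurrence:
`η ∅ = 1` and `η λ = (-1)^h (η (λ-ĥ) + (-1)^{λ₁} h η (λ-ĉ))`, where
`h = λ₁ + r - 1` is the hook size, `λ-ĥ = strip (tail λ)` removes the hook,
and `λ-ĉ = strip λ` removes the first column. -/
def eta : List ℕ → ℤ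
  | [] => 1
  | a :: t =>
      (-1) ^ (a + t.length) *
        (eta (strip t) + (-1) ^ a * ((a : ℤ) + t.length) * eta (strip (a :: t)))
  termination_by l => l.sum + l.length
  decreasing_by
  · have h1 := strip_measure t
    simp only [List.sum_cons, List.length_cons]
    omega
  · have h1 := strip_measure (a :: t)
    simp only [List.sum_cons, List.length_cons] at h1 ⊢
    omega

/-- `l` is (the list of parts of) a partition of `n`: weakly decreasing,
all parts positive, summing to `n`. -/
def IsPartition (n : ℕ) (l : List ℕ) : Prop :=
  l.Pairwise (· ≥ ·) ∧ (∀ x ∈ l, 0 < x) ∧ l.sum = n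

/-- The hook partition `(a, 1^(n-a))` of `n`. -/
def hookP (n a : ℕ) : List ℕ := a :: List.replicate (n - a) 1

/-!
Unfolding Renteln's recurrence expresses the three eigenvalues through derangement numbers `D`.
With `k = n - 6`, the recurrence `D (m+1) = (m+1) D m - (-1)^m` collapses their differences to
`η(n-3,2,1) = η(n-3,1,1,1) - 3 D (k+1)` and `η(n-3,3) = η(n-3,2,1) - 3 (D (k+1) + 2 D k)`.
Since `η(n-3,1,1,1) = (-1)^k - (k+6) D (k+2) < 0`, all three eigenvalues are negative and
ordered, and the middle comparison is tight exactly when `D (k+1) = 0`, i.e. `k = 0`.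
-/

theorem numDerangements_pos : ∀ {m : ℕ}, m ≠ 1 → 0 < numDerangements m
  | 0, _ => Nat.one_pos
  | 1, h => absurd rfl h
  | n + 2, _ => by
    rw [numDerangements_add_two]
    rcases eq_or_ne n 1 with rfl | hn
    · decide
    · have := numDerangements_pos hn
      positivity

theorem numDerangements_eq_zero_iff {m : ℕ} : numDerangements m = 0 ↔ m = 1 := by
  refine ⟨fun h => ?_, fun h => h ▸ numDerangements_one⟩
  by_contra hm
  exact (numDerangements_pos hm).ne' h

theorem eta_cons (a : ℕ) (t : List ℕ) :
    eta (a :: t) = (-1) ^ (a + t.length) * eta (strip t)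
      + (-1) ^ t.length * ((a : ℤ) + t.length) * eta (strip (a :: t)) := by
  have hsq : ((-1 : ℤ) ^ a) * (-1) ^ a = 1 := by rw [← pow_add]; exact Even.neg_one_pow ⟨a, rfl⟩
  rw [eta, pow_add]
  linear_combination ((-1) ^ t.length * ((a : ℤ) + t.length) * eta (strip (a :: t))) * hsq

theorem eta_nil : eta [] = 1 := by
  rw [eta]

theorem eta_strip_singleton (m : ℕ) : eta (strip [m + 1]) = eta [m] := by
  rcases m with _ | m
  · simp [strip, eta_cons, eta_nil]
  · simp [strip]

theorem eta_singleton (m : ℕ) : eta [m] = numDerangements m := by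
  induction m with
  | zero => simp [eta_cons, eta_nil, strip]
  | succ m ih =>
    have hnil : strip [] = [] := rfl
    rw [eta_cons, hnil, eta_nil, eta_strip_singleton, ih, numDerangements_succ]
    simp only [List.length_nil]
    push_cast
    ring

theorem eta_succ_one (k : ℕ) : eta [k + 1, 1] = (-1) ^ k - (k + 2) * numDerangements k := by
  have hstrip : strip [k + 1, 1] = strip [k + 1] := by simp [strip, List.filter_cons]
  have hone : strip [1] = [] := rfl
  rw [eta_cons, hstrip, hone, eta_nil, eta_strip_singleton, eta_singleton]
  simp only [List.length_cons, List.length_nil]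
  push_cast
  ring

theorem eta_add_two_two (k : ℕ) : eta [k + 2, 2] = -(k + 3) * eta [k + 1, 1] := by
  have hstrip : strip [k + 2, 2] = [k + 1, 1] := by simp [strip]
  have htail : strip [2] = [1] := rfl
  rw [eta_cons, hstrip, htail, eta_singleton, numDerangements_one]
  simp only [List.length_cons, List.length_nil]
  push_cast
  ring

theorem eta_add_three_three (k : ℕ) :
    eta [k + 3, 3] = (-1) ^ k + (k + 3) * (k + 4) * eta [k + 1, 1] := by
  have hstrip : strip [k + 3, 3] = [k + 2, 2] := by simp [strip]
  have htail : strip [3] = [2] := rfl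
  have htwo : eta [2] = 1 := by rw [eta_singleton]; rfl
  rw [eta_cons, hstrip, htail, eta_add_two_two, htwo]
  simp only [List.length_cons, List.length_nil]
  push_cast
  ring

theorem eta_add_three_two_one (k : ℕ) : eta [k + 3, 2, 1] = (k + 5) * eta [k + 2, 1] := by
  have hstrip : strip [k + 3, 2, 1] = [k + 2, 1] := by simp [strip]
  have htail : strip [2, 1] = [1] := rfl
  rw [eta_cons, hstrip, htail, eta_singleton, numDerangements_one]
  simp only [List.length_cons, List.length_nil]
  push_cast
  ring

theorem eta_add_three_one_one_one (k : ℕ) :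
    eta [k + 3, 1, 1, 1] = (-1) ^ k - (k + 6) * numDerangements (k + 2) := by
  have hstrip : strip [k + 3, 1, 1, 1] = [k + 2] := by simp [strip]
  have htail : strip [1, 1, 1] = [] := rfl
  rw [eta_cons, hstrip, htail, eta_nil, eta_singleton]
  simp only [List.length_cons, List.length_nil]
  push_cast
  ring

theorem eta_add_three_two_one_eq (k : ℕ) :
    eta [k + 3, 2, 1] = eta [k + 3, 1, 1, 1] - 3 * numDerangements (k + 1) := by
  rw [eta_add_three_two_one, eta_add_three_one_one_one, eta_succ_one, numDerangements_succ (k + 1)]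
  push_cast
  ring

theorem eta_add_three_three_eq (k : ℕ) :
    eta [k + 3, 3] =
      eta [k + 3, 2, 1] - 3 * (numDerangements (k + 1) + 2 * numDerangements k) := by
  rw [eta_add_three_three, eta_add_three_two_one, eta_succ_one, eta_succ_one,
    numDerangements_succ k]
  push_cast
  ring

theorem eta_add_three_one_one_one_neg (k : ℕ) : eta [k + 3, 1, 1, 1] < 0 := by
  have hD : (1 : ℤ) ≤ numDerangements (k + 2) := by exact_mod_cast numDerangements_pos (by omega)
  have hsign : (-1 : ℤ) ^ k ≤ 1 := by rcases neg_one_pow_eq_or ℤ k with h | h <;> simp [h]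
  rw [eta_add_three_one_one_one]
  nlinarith

/-- For `n ≥ 6`, `|η_{(n-3,3)}| > |η_{(n-3,2,1)}| ≥ |η_{(n-3,1,1,1)}|`, with the second
inequality an equality exactly when `n = 6`. -/
theorem eta_n_minus_three (n : ℕ) (hn : 6 ≤ n) :
    |eta [n - 3, 2, 1]| < |eta [n - 3, 3]| ∧
    |eta [n - 3, 1, 1, 1]| ≤ |eta [n - 3, 2, 1]| ∧
    (|eta [n - 3, 2, 1]| = |eta [n - 3, 1, 1, 1]| ↔ n = 6) := by
  obtain ⟨k, rfl⟩ : ∃ k, n = k + 6 := ⟨n - 6, by omega⟩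
  rw [show k + 6 - 3 = k + 3 by omega]
  have hC := eta_add_three_one_one_one_neg k
  have hBC := eta_add_three_two_one_eq k
  have hAB := eta_add_three_three_eq k
  have hD₁ : (0 : ℤ) ≤ numDerangements (k + 1) := Nat.cast_nonneg _
  have hD : (0 : ℤ) < numDerangements (k + 1) + 2 * numDerangements k := by
    rcases eq_or_ne k 0 with rfl | hk
    · decide
    · have := numDerangements_pos (m := k + 1) (by omega)
      positivity
  have hB : eta [k + 3, 2, 1] < 0 := by linarith
  rw [abs_of_neg hC, abs_of_neg hB, abs_of_neg (by linarith)]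
  refine ⟨by linarith, by linarith, ?_⟩
  rw [neg_inj, hBC, sub_eq_self, mul_eq_zero, Nat.cast_eq_zero, numDerangements_eq_zero_iff]
  omega
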